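/- For every fixed point combinator Y and every natural number n ≥ 0, the term B Y S^n I (B Y applied to n copies of S and then to I) is a fixed point combinator. -/

import Mathlib

/-!
Call `Q` an S-fixer if `Q M =β S M (Q M)` for every `M`. If `Y` is an fpc, then `B Y` is an
S-fixer: `B Y M =β λz. Y (M z) =β λz. M z (Y (M z)) =β S M (B Y M)`. S-fixers are closed under
application to `S`, since `Q S M =β S S (Q S) M =β S M (Q S M)`; so `B Y S^n` is an S-fixer.
Finally, for an S-fixer `Q` the term `Q I` is an fpc: `Q I x =β S I (Q I) x =β x (Q I x)`.
-/

/-- Untyped λ-terms in de Bruijn notation. -/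
inductive Lam : Type
  | var : Nat → Lam
  | app : Lam → Lam → Lam
  | lam : Lam → Lam
  deriving DecidableEq

namespace Lam

/-- Lift (shift) free variables ≥ `d` by one. -/
def lift (d : Nat) : Lam → Lam
  | var n => if n < d then var n else var (n + 1)
  | app s t => app (lift d s) (lift d t)
  | lam t => lam (lift (d + 1) t)

/-- Capture-avoiding substitution of `u` for the variable with index `k`. -/
def subst (k : Nat) (u : Lam) : Lam → Lam
  | var n => if n = k then u else if k < n then var (n - 1) else var n
  | app s t => app (subst k u s) (subst k u t)
  | lam t => lam (subst (k + 1) (lift 0 u) t)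

/-- One-step β-reduction `→β` (compatible closure of the β-rule). -/
inductive Step : Lam → Lam → Prop
  | beta (t u : Lam) : Step (app (lam t) u) (subst 0 u t)
  | appL {s s' : Lam} (t : Lam) : Step s s' → Step (app s t) (app s' t)
  | appR (s : Lam) {t t' : Lam} : Step t t' → Step (app s t) (app s t')
  | lam {t t' : Lam} : Step t t' → Step (lam t) (lam t')

/-- Many-step β-reduction `↠β`. -/
def Red : Lam → Lam → Prop := Relation.ReflTransGen Step

/-- β-convertibility `=β`. -/
def Conv : Lam → Lam → Prop := Relation.EqvGen Step

/-- `Y` is a fixed point combinator: `Y x =β x (Y x)` for a fresh variable `x`. -/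
def isFPC (Y : Lam) : Prop :=
  Conv (app (lift 0 Y) (var 0)) (app (var 0) (app (lift 0 Y) (var 0)))

/-- `M P^n`: `M` applied to `n` copies of `P`. -/
def appIter (M P : Lam) : Nat → Lam
  | 0 => M
  | n + 1 => appIter (app M P) P n

/-- `I = λx.x` -/
def K_I : Lam := lam (var 0)

/-- `S = λxyz.xz(yz)` -/
def K_S : Lam := lam (lam (lam (app (app (var 2) (var 0)) (app (var 1) (var 0)))))

/-- `B = λxyz.x(yz)` -/
def K_B : Lam := lam (lam (lam (app (var 2) (app (var 1) (var 0)))))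

/-- `δ = λab.b(ab)` -/
def K_delta : Lam := lam (lam (app (var 0) (app (var 1) (var 0))))

/-- `ω_f = λx.f(xx)` (with `f` the variable bound just outside). -/
def K_omega : Lam := lam (app (var 1) (app (var 0) (var 0)))

/-- Curry's fpc `Y0 = λf.ω_f ω_f`. -/
def Y0 : Lam := lam (app K_omega K_omega)

/-- `η = λxf.f(xxf)` -/
def K_eta : Lam := lam (lam (app (var 0) (app (app (var 1) (var 1)) (var 0))))

/-- Turing's fpc `Y1 = ηη`. -/
def Y1 : Lam := app K_eta K_eta

/-- One head reduction step: contraction of the head redex. -/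
inductive Head : Lam → Lam → Prop
  | beta (t u : Lam) : Head (app (lam t) u) (subst 0 u t)
  | app {s s' : Lam} (t : Lam) : (∀ u, s ≠ lam u) → Head s s' → Head (app s t) (app s' t)
  | lam {t t' : Lam} : Head t t' → Head (lam t) (lam t')

/-- Exactly `k` head reduction steps. -/
def HeadN : Nat → Lam → Lam → Prop
  | 0, s, t => s = t
  | k + 1, s, t => ∃ u, Head s u ∧ HeadN k u t

/-- Exactly `k` β-reduction steps. -/
def StepN : Nat → Lam → Lam → Prop
  | 0, s, t => s = t
  | k + 1, s, t => ∃ u, Step s u ∧ StepN k u t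

theorem lift_lift (t : Lam) {d e : Nat} (h : e ≤ d) :
    lift e (lift d t) = lift (d + 1) (lift e t) := by
  induction t generalizing d e with
  | var n =>
    simp only [lift]
    split_ifs <;> simp only [lift] <;> (try split_ifs) <;> (try simp) <;> omega
  | app s t ihs iht => simp [lift, ihs h, iht h]
  | lam t ih => simp [lift, ih (Nat.succ_le_succ h)]

theorem subst_lift (t u : Lam) (k : Nat) : subst k u (lift k t) = t := by
  induction t generalizing k u with
  | var n =>
    simp only [lift]
    split_ifs <;> simp only [subst] <;> (try split_ifs) <;> (try simp) <;> omega
  | app s t ihs iht => simp [lift, subst, ihs, iht]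
  | lam t ih => simp [lift, subst, ih]

theorem lift_subst_of_le (t u : Lam) {k d : Nat} (h : d ≤ k) :
    lift d (subst k u t) = subst (k + 1) (lift d u) (lift d t) := by
  induction t generalizing k d u with
  | var n =>
    simp only [lift, subst]
    split_ifs <;> simp only [lift, subst] <;> (try split_ifs) <;> (try simp) <;> omega
  | app s t ihs iht => simp [lift, subst, ihs _ h, iht _ h]
  | lam t ih =>
    simp only [lift, subst, ih _ (Nat.succ_le_succ h), lift_lift u (Nat.zero_le d)]

theorem lift_subst_of_ge (t u : Lam) {k d : Nat} (h : k ≤ d) :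
    lift d (subst k u t) = subst k (lift d u) (lift (d + 1) t) := by
  induction t generalizing k d u with
  | var n =>
    simp only [lift, subst]
    split_ifs <;> simp only [lift, subst] <;> (try split_ifs) <;> (try simp) <;> omega
  | app s t ihs iht => simp [lift, subst, ihs _ h, iht _ h]
  | lam t ih =>
    simp only [lift, subst, ih _ (Nat.succ_le_succ h), lift_lift u (Nat.zero_le d)]

theorem subst_subst (t u v : Lam) {i j : Nat} (h : i ≤ j) :
    subst j u (subst i v t) = subst i (subst j u v) (subst (j + 1) (lift i u) t) := by
  induction t generalizing i j u v with
  | var n =>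
    simp only [subst]
    split_ifs <;> simp only [subst, subst_lift] <;> (try split_ifs) <;> (try simp) <;> omega
  | app s t ihs iht => simp [subst, ihs _ _ h, iht _ _ h]
  | lam t ih =>
    simp only [subst, ih _ _ (Nat.succ_le_succ h), lift_subst_of_le v u (Nat.zero_le j),
      lift_lift u (Nat.zero_le i)]

theorem Step.subst {s t : Lam} (h : Step s t) (k : Nat) (u : Lam) :
    Step (subst k u s) (subst k u t) := by
  induction h generalizing k u with
  | beta t' u' =>
    have hβ := Step.beta (Lam.subst (k + 1) (lift 0 u) t') (Lam.subst k u u')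
    rwa [← subst_subst t' u u' (Nat.zero_le k)] at hβ
  | appL _ _ ih => exact .appL _ (ih k u)
  | appR _ _ ih => exact .appR _ (ih k u)
  | lam _ ih => exact .lam (ih (k + 1) (lift 0 u))

theorem Step.lift {s t : Lam} (h : Step s t) (d : Nat) : Step (lift d s) (lift d t) := by
  induction h generalizing d with
  | beta t' u' =>
    have hβ := Step.beta (Lam.lift (d + 1) t') (Lam.lift d u')
    rwa [← lift_subst_of_ge t' u' (Nat.zero_le d)] at hβ
  | appL _ _ ih => exact .appL _ (ih d)
  | appR _ _ ih => exact .appR _ (ih d)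
  | lam _ ih => exact .lam (ih (d + 1))

infix:50 " =β " => Conv

theorem Step.conv {s t : Lam} (h : Step s t) : s =β t := .rel _ _ h

theorem Red.conv {s t : Lam} (h : Red s t) : s =β t :=
  Relation.EqvGen.reflTransGen_le_eqvGen _ _ _ h

namespace Conv

theorem refl (s : Lam) : s =β s := Relation.EqvGen.refl s

theorem symm {s t : Lam} (h : s =β t) : t =β s := Relation.EqvGen.symm _ _ h

theorem trans {s t u : Lam} (h₁ : s =β t) (h₂ : t =β u) : s =β u :=
  Relation.EqvGen.trans _ _ _ h₁ h₂

instance : Trans Conv Conv Conv := ⟨trans⟩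

theorem map {f : Lam → Lam} (hf : ∀ {a b}, Step a b → Step (f a) (f b)) {s t : Lam}
    (h : s =β t) : f s =β f t := by
  induction h with
  | rel _ _ hab => exact (hf hab).conv
  | refl => exact refl _
  | symm _ _ _ ih => exact ih.symm
  | trans _ _ _ _ _ ih₁ ih₂ => exact ih₁.trans ih₂

theorem appL {s t : Lam} (h : s =β t) (u : Lam) : app s u =β app t u := map (.appL u) h

theorem appR (u : Lam) {s t : Lam} (h : s =β t) : app u s =β app u t := map (.appR u) h

theorem lam {s t : Lam} (h : s =β t) : lam s =β lam t := map .lam h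

theorem subst {s t : Lam} (h : s =β t) (k : Nat) (u : Lam) :
    subst k u s =β subst k u t :=
  map (·.subst k u) h

theorem lift {s t : Lam} (h : s =β t) (d : Nat) : lift d s =β lift d t :=
  map (·.lift d) h

end Conv

theorem lift_K_I (d : Nat) : lift d K_I = K_I := by simp [K_I, lift]

theorem lift_K_S (d : Nat) : lift d K_S = K_S := by simp [K_S, lift]

theorem lift_K_B (d : Nat) : lift d K_B = K_B := by simp [K_B, lift]

theorem lift_appIter (d : Nat) (M P : Lam) (n : Nat) :
    lift d (appIter M P n) = appIter (lift d M) (lift d P) n := by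
  induction n generalizing M with
  | zero => rfl
  | succ n ih => exact ih (app M P)

theorem step_I_app (a : Lam) : Step (app K_I a) a := .beta (var 0) a

theorem red_B_app_app (a b : Lam) :
    Red (app (app K_B a) b) (lam (app (lift 0 a) (app (lift 0 b) (var 0)))) := by
  have h₁ : Step (app K_B a) (lam (lam (app (lift 1 (lift 0 a)) (app (var 1) (var 0))))) := by
    have hβ := Step.beta (lam (lam (app (var 2) (app (var 1) (var 0))))) a
    simpa [K_B, Lam.subst, lift_lift a (le_refl 0)] using hβ
  have h₂ : Step (app (lam (lam (app (lift 1 (lift 0 a)) (app (var 1) (var 0))))) b)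
      (lam (app (lift 0 a) (app (lift 0 b) (var 0)))) := by
    simpa [Lam.subst, subst_lift] using
      Step.beta (lam (app (lift 1 (lift 0 a)) (app (var 1) (var 0)))) b
  exact .head (h₁.appL b) (.single h₂)

theorem red_B (a b c : Lam) : Red (app (app (app K_B a) b) c) (app a (app b c)) := by
  have hβ := Step.beta (app (lift 0 a) (app (lift 0 b) (var 0))) c
  simp only [Lam.subst, subst_lift] at hβ
  exact .tail ((red_B_app_app a b).lift (app · c) fun _ _ h => h.appL c) hβ

theorem red_S_app_app (a b : Lam) :
    Red (app (app K_S a) b) (lam (app (app (lift 0 a) (var 0)) (app (lift 0 b) (var 0)))) := by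
  have h₁ : Step (app K_S a)
      (lam (lam (app (app (lift 1 (lift 0 a)) (var 0)) (app (var 1) (var 0))))) := by
    have hβ := Step.beta (lam (lam (app (app (var 2) (var 0)) (app (var 1) (var 0))))) a
    simpa [K_S, Lam.subst, lift_lift a (le_refl 0)] using hβ
  have h₂ : Step (app (lam (lam (app (app (lift 1 (lift 0 a)) (var 0)) (app (var 1) (var 0))))) b)
      (lam (app (app (lift 0 a) (var 0)) (app (lift 0 b) (var 0)))) := by
    simpa [Lam.subst, subst_lift] using
      Step.beta (lam (app (app (lift 1 (lift 0 a)) (var 0)) (app (var 1) (var 0)))) b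
  exact .head (h₁.appL b) (.single h₂)

theorem red_S (a b c : Lam) : Red (app (app (app K_S a) b) c) (app (app a c) (app b c)) := by
  have hβ := Step.beta (app (app (lift 0 a) (var 0)) (app (lift 0 b) (var 0))) c
  simp only [Lam.subst, subst_lift] at hβ
  exact .tail ((red_S_app_app a b).lift (app · c) fun _ _ h => h.appL c) hβ

theorem isFPC.conv_app {Y : Lam} (hY : isFPC Y) (N : Lam) :
    app Y N =β app N (app Y N) := by
  simpa [Lam.subst, subst_lift] using hY.subst 0 N

theorem isFPC.lift {Y : Lam} (hY : isFPC Y) : isFPC (lift 0 Y) := by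
  simpa [isFPC, Lam.lift, ← lift_lift Y (le_refl 0)] using Conv.lift hY 1

def IsSFixer (Q : Lam) : Prop := ∀ M, app Q M =β app (app K_S M) (app Q M)

theorem IsSFixer.app_S {Q : Lam} (hQ : IsSFixer Q) : IsSFixer (app Q K_S) := fun M =>
  calc app (app Q K_S) M
      =β app (app (app K_S K_S) (app Q K_S)) M := (hQ K_S).appL M
    _ =β app (app K_S M) (app (app Q K_S) M) := (red_S _ _ _).conv

theorem IsSFixer.appIter {Q : Lam} (hQ : IsSFixer Q) (n : Nat) :
    IsSFixer (appIter Q K_S n) := by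
  induction n generalizing Q with
  | zero => exact hQ
  | succ n ih => exact ih hQ.app_S

theorem IsSFixer.conv_app_I_app {Q : Lam} (hQ : IsSFixer Q) (N : Lam) :
    app (app Q K_I) N =β app N (app (app Q K_I) N) :=
  calc app (app Q K_I) N
      =β app (app (app K_S K_I) (app Q K_I)) N := (hQ K_I).appL N
    _ =β app (app K_I N) (app (app Q K_I) N) := (red_S _ _ _).conv
    _ =β app N (app (app Q K_I) N) := (step_I_app N).conv.appL _

theorem isSFixer_B_app {Y : Lam} (hY : isFPC Y) : IsSFixer (app K_B Y) := fun M =>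
  calc app (app K_B Y) M
      =β lam (app (lift 0 Y) (app (lift 0 M) (var 0))) := (red_B_app_app Y M).conv
    _ =β lam (app (app (lift 0 M) (var 0)) (app (lift 0 Y) (app (lift 0 M) (var 0)))) :=
      (hY.lift.conv_app _).lam
    _ =β lam (app (app (lift 0 M) (var 0)) (app (lift 0 (app (app K_B Y) M)) (var 0))) := by
      simp only [Lam.lift, lift_K_B]
      exact ((red_B _ _ _).conv.symm.appR _).lam
    _ =β app (app K_S M) (app (app K_B Y) M) := (red_S_app_app M _).conv.symm

/-- For every fpc `Y` and every `n ≥ 0`, the term `B Y S^n I` is an fpc. -/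
theorem BYSnI_isFPC : ∀ Y : Lam, isFPC Y → ∀ n : Nat, isFPC (app (appIter (app K_B Y) K_S n) K_I) := by
  intro Y hY n
  have hlift : lift 0 (app (appIter (app K_B Y) K_S n) K_I)
      = app (appIter (app K_B (lift 0 Y)) K_S n) K_I := by
    simp only [Lam.lift, lift_appIter, lift_K_B, lift_K_S, lift_K_I]
  rw [isFPC, hlift]
  exact ((isSFixer_B_app hY.lift).appIter n).conv_app_I_app (var 0)

end Lam
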